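/- arXiv:2412.19339 — 2 statements merged into one kernel-verified Lean document; each statement's English description precedes it below -/
import Mathlib

section
/- Let n ≥ 1, let a₁, a₂, a₃ ∈ ℂ with a₁ ≠ 0, let c ∈ ℂⁿ, let 1 ≤ μ ≤ n, and let g : ℂⁿ → ℂ be a holomorphic function satisfying 2a₂·∂g/∂z_μ(z) + a₃·(∂g/∂z_μ(z))² + 2a₃·∂²g/∂z_μ²(z) = 0 for all z ∈ ℂⁿ. Define f(z) = ε·(1/a₁)·e^{g(z−c)/2} where ε ∈ {1, −1}. Then f satisfies a₁²·f(z+c)² + (a₂·∂f/∂z_μ(z) + a₃·∂²f/∂z_μ²(z))² = e^{g(z)} for all z ∈ ℂⁿ. -/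
/-!
Write `f = k · exp G` with `G z = g (z - c) / 2` and `k = ε / a₁`. Then `∂f = f · ∂G` and
`∂²f = f · ((∂G)² + ∂²G)`, so `a₂ ∂f + a₃ ∂²f` is `f (z) / 4` times the left-hand side of the
equation for `g` at `z - c`, which vanishes. What remains is `a₁² f(z + c)² = ε² e^{g z} = e^{g z}`.
-/

open Complex

/-- Complex partial derivative in the `μ`-th coordinate of a function on `ℂⁿ`. -/
noncomputable def pd {n : ℕ} (μ : Fin n) (f : (Fin n → ℂ) → ℂ) : (Fin n → ℂ) → ℂ :=
  fun z => deriv (fun w => f (Function.update z μ w)) (z μ)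

theorem Differentiable.comp_update {𝕜 ι E : Type*} [NontriviallyNormedField 𝕜] [Fintype ι]
    [DecidableEq ι] [NormedAddCommGroup E] [NormedSpace 𝕜 E] {G : (ι → 𝕜) → E}
    (hG : Differentiable 𝕜 G) (y : ι → 𝕜) (i : ι) :
    Differentiable 𝕜 fun w => G (Function.update y i w) :=
  fun w => hG.differentiableAt.comp w (hasDerivAt_update y i w).differentiableAt

section PartialDerivative

variable {n : ℕ} (μ : Fin n)

theorem pd_update_eq_deriv (G : (Fin n → ℂ) → ℂ) (y : Fin n → ℂ) :
    (fun w => pd μ G (Function.update y μ w)) = deriv fun w => G (Function.update y μ w) := by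
  funext w
  simp only [pd, Function.update_idem, Function.update_self]

/- Joint holomorphy of `pd μ G` would need Hartogs' theorem, so only holomorphy along slices
is tracked. -/
theorem differentiable_update_pd {G : (Fin n → ℂ) → ℂ}
    (hG : ∀ y, Differentiable ℂ fun w => G (Function.update y μ w)) (y : Fin n → ℂ) :
    Differentiable ℂ fun w => pd μ G (Function.update y μ w) := by
  rw [pd_update_eq_deriv]
  exact (hG y).deriv

theorem pd_const_mul (k : ℂ) (G : (Fin n → ℂ) → ℂ) :
    pd μ (fun z => k * G z) = fun z => k * pd μ G z :=
  funext fun z => congrFun (deriv_const_mul_field' k) (z μ)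

theorem pd_div_const (k : ℂ) (G : (Fin n → ℂ) → ℂ) :
    pd μ (fun z => G z / k) = fun z => pd μ G z / k :=
  funext fun _ => deriv_div_const k

theorem pd_comp_sub_const (G : (Fin n → ℂ) → ℂ) (c : Fin n → ℂ) :
    pd μ (fun z => G (z - c)) = fun z => pd μ G (z - c) := by
  funext z
  have hshift (w : ℂ) : Function.update z μ w - c = Function.update (z - c) μ (w - c μ) := by
    rw [Function.update_sub, Function.update_eq_self]
  simp only [pd, hshift]
  exact deriv_comp_sub_const (f := fun w => G (Function.update (z - c) μ w)) (c μ) (z μ)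

theorem pd_mul {F H : (Fin n → ℂ) → ℂ} {z : Fin n → ℂ}
    (hF : DifferentiableAt ℂ (fun w => F (Function.update z μ w)) (z μ))
    (hH : DifferentiableAt ℂ (fun w => H (Function.update z μ w)) (z μ)) :
    pd μ (fun z => F z * H z) z = pd μ F z * H z + F z * pd μ H z := by
  simp only [pd]
  rw [deriv_fun_mul hF hH, Function.update_eq_self]

theorem pd_cexp {G : (Fin n → ℂ) → ℂ} {z : Fin n → ℂ}
    (hG : DifferentiableAt ℂ (fun w => G (Function.update z μ w)) (z μ)) :
    pd μ (fun z => exp (G z)) z = exp (G z) * pd μ G z := by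
  simp only [pd]
  rw [deriv_cexp hG, Function.update_eq_self]

theorem pd_pd_cexp {G : (Fin n → ℂ) → ℂ}
    (hG : ∀ y, Differentiable ℂ fun w => G (Function.update y μ w)) (z : Fin n → ℂ) :
    pd μ (pd μ fun z => exp (G z)) z = exp (G z) * (pd μ G z ^ 2 + pd μ (pd μ G) z) := by
  have hpd : pd μ (fun z => exp (G z)) = fun z => exp (G z) * pd μ G z :=
    funext fun y => pd_cexp μ (hG y _)
  rw [hpd, pd_mul μ (hG z _).cexp (differentiable_update_pd μ hG z _), pd_cexp μ (hG z _)]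
  ring

end PartialDerivative

theorem stmt13_general {n : ℕ} (a₁ a₂ a₃ : ℂ) (ha₁ : a₁ ≠ 0)
    (c : Fin n → ℂ) (μ : Fin n) (g : (Fin n → ℂ) → ℂ) (hg : Differentiable ℂ g)
    (hpde : ∀ z, 2 * a₂ * pd μ g z + a₃ * (pd μ g z) ^ 2 + 2 * a₃ * pd μ (pd μ g) z = 0)
    (ε : ℂ) (hε : ε = 1 ∨ ε = -1)
    (f : (Fin n → ℂ) → ℂ)
    (hf : ∀ z, f z = ε * (1 / a₁) * Complex.exp (g (z - c) / 2)) :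
    ∀ z, a₁ ^ 2 * (f (z + c)) ^ 2 + (a₂ * pd μ f z + a₃ * pd μ (pd μ f) z) ^ 2
      = Complex.exp (g z) := by
  intro z
  have hG : Differentiable ℂ fun z => g (z - c) / 2 := by fun_prop
  have hcancel : a₂ * pd μ f z + a₃ * pd μ (pd μ f) z = 0 := by
    simp only [funext hf, pd_const_mul]
    rw [pd_pd_cexp μ (hG.comp_update · μ), pd_cexp μ (hG.comp_update z μ _),
      pd_div_const, pd_comp_sub_const, pd_div_const, pd_comp_sub_const]
    linear_combination ε * (1 / a₁) * exp (g (z - c) / 2) / 4 * hpde (z - c)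
  have hε2 : ε ^ 2 = 1 := by rcases hε with rfl | rfl <;> norm_num
  have hexp : exp (g z / 2) ^ 2 = exp (g z) := by rw [← exp_nat_mul]; ring_nf
  rw [hcancel, hf, add_sub_cancel_right]
  field_simp
  rw [hexp, hε2]
  ring

theorem stmt13 {n : ℕ} (hn : 1 ≤ n) (a₁ a₂ a₃ : ℂ) (ha₁ : a₁ ≠ 0)
    (c : Fin n → ℂ) (μ : Fin n) (g : (Fin n → ℂ) → ℂ) (hg : Differentiable ℂ g)
    (hpde : ∀ z, 2 * a₂ * pd μ g z + a₃ * (pd μ g z) ^ 2 + 2 * a₃ * pd μ (pd μ g) z = 0)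
    (ε : ℂ) (hε : ε = 1 ∨ ε = -1)
    (f : (Fin n → ℂ) → ℂ)
    (hf : ∀ z, f z = ε * (1 / a₁) * Complex.exp (g (z - c) / 2)) :
    ∀ z, a₁ ^ 2 * (f (z + c)) ^ 2 + (a₂ * pd μ f z + a₃ * pd μ (pd μ f) z) ^ 2
      = Complex.exp (g z) :=
  stmt13_general a₁ a₂ a₃ ha₁ c μ g hg hpde ε hε f hf
end

section
/- Let n ≥ 1, let a₁, a₂, a₃, a₄ ∈ ℂ, let c ∈ ℂⁿ, let 1 ≤ μ ≤ n, let β = (β₁,…,βₙ) ∈ ℂⁿ with β_μ ≠ 0, and let K₃, K₄, B ∈ ℂ with a₁ ≠ 0, a₃ ≠ 0, K₃ ≠ 0. Assume K₃² + K₄² = 1 and e^{(1/2)Σⱼ βⱼcⱼ} = (a₁/(a₃K₃))·((K₄β_μ)/2 − (a₄K₃/(4a₁))β_μ² − a₂K₃/a₁). Define f : ℂⁿ → ℂ by f(z) = (2K₃/(a₁β_μ))·e^{(1/2)(Σⱼ βⱼzⱼ + B)}. Then f satisfies (a₁·∂f/∂z_μ(z))² + (a₂·f(z) + a₃·f(z+c)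 + a₄·∂²f/∂z_μ²(z))² = e^{Σⱼ βⱼzⱼ + B} for all z ∈ ℂⁿ. -/
/-!
Along `z_μ` the function `f` is an eigenfunction of `∂/∂z_μ` with eigenvalue `β_μ / 2`, and the
shift by `c` multiplies it by `e^{(1/2) Σ βⱼcⱼ}`. Hence, by the choice of that constant, the two
brackets are `K₃ e^{g/2}` and `K₄ e^{g/2}`, and `K₃² + K₄² = 1` gives `e^g`.
-/

open Complex

theorem hasDerivAt_sum_mul_update {ι : Type*} [Fintype ι] [DecidableEq ι] (α z : ι → ℂ) (i : ι)
    (w : ℂ) : HasDerivAt (fun w => ∑ j, α j * Function.update z i w j) (α i) w := by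
  have h := HasDerivAt.fun_sum fun j (_ : j ∈ Finset.univ) =>
    (hasDerivAt_pi.1 (hasDerivAt_update z i w) j).const_mul (α j)
  simpa [Pi.single_apply] using h

theorem pd_comp_sum_mul {n : ℕ} (μ : Fin n) (α : Fin n → ℂ) {g : ℂ → ℂ} (z : Fin n → ℂ)
    (hg : DifferentiableAt ℂ g (∑ j, α j * z j)) :
    pd μ (fun z => g (∑ j, α j * z j)) z = α μ * deriv g (∑ j, α j * z j) := by
  have h := hg.hasDerivAt.comp_of_eq (z μ) (hasDerivAt_sum_mul_update α z μ (z μ))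
    (by rw [Function.update_eq_self])
  exact h.deriv.trans (mul_comm _ _)

theorem pd_const_mul_exp {n : ℕ} (μ : Fin n) (α : Fin n → ℂ) (K l b : ℂ) :
    pd μ (fun z => K * exp (l * (∑ j, α j * z j + b)))
      = fun z => l * α μ * K * exp (l * (∑ j, α j * z j + b)) := by
  funext z
  have h : HasDerivAt (fun s => K * exp (l * (s + b)))
      (K * (exp (l * (∑ j, α j * z j + b)) * l)) (∑ j, α j * z j) :=
    ((((hasDerivAt_id' _).add_const b).const_mul l).cexp.const_mul K).congr_deriv (by ring)
  rw [pd_comp_sum_mul μ α z h.differentiableAt, h.deriv]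
  ring

theorem stmt15_general {n : ℕ} (a₁ a₂ a₃ a₄ : ℂ) (ha₁ : a₁ ≠ 0) (ha₃ : a₃ ≠ 0)
    (c : Fin n → ℂ) (μ : Fin n) (β : Fin n → ℂ) (hβμ : β μ ≠ 0)
    (K₃ K₄ B : ℂ) (hK₃ : K₃ ≠ 0) (hK : K₃ ^ 2 + K₄ ^ 2 = 1)
    (hexp : Complex.exp ((1 / 2) * ∑ j, β j * c j)
      = (a₁ / (a₃ * K₃)) * ((K₄ * β μ) / 2 - (a₄ * K₃ / (4 * a₁)) * (β μ) ^ 2 - a₂ * K₃ / a₁))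
    (f : (Fin n → ℂ) → ℂ)
    (hf : ∀ z, f z = (2 * K₃ / (a₁ * β μ)) * Complex.exp ((1 / 2) * ((∑ j, β j * z j) + B))) :
    ∀ z, (a₁ * pd μ f z) ^ 2
        + (a₂ * f z + a₃ * f (z + c) + a₄ * pd μ (pd μ f) z) ^ 2
      = Complex.exp ((∑ j, β j * z j) + B) := by
  obtain rfl := funext hf
  intro z
  have hshift : ∑ j, β j * (z + c) j = ∑ j, β j * z j + ∑ j, β j * c j := by
    simp only [Pi.add_apply, mul_add, Finset.sum_add_distrib]
  have hsq : exp (∑ j, β j * z j + B) = exp ((1 / 2) * (∑ j, β j * z j + B)) ^ 2 := by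
    rw [← exp_nat_mul]; ring_nf
  simp only [pd_const_mul_exp, hshift, hsq]
  rw [show (1 / 2) * (∑ j, β j * z j + ∑ j, β j * c j + B)
    = (1 / 2) * (∑ j, β j * z j + B) + (1 / 2) * ∑ j, β j * c j by ring, exp_add, hexp]
  field_simp
  linear_combination 64 * a₁ ^ 2 * β μ ^ 2 * hK

theorem stmt15 {n : ℕ} (hn : 1 ≤ n) (a₁ a₂ a₃ a₄ : ℂ) (ha₁ : a₁ ≠ 0) (ha₃ : a₃ ≠ 0)
    (c : Fin n → ℂ) (μ : Fin n) (β : Fin n → ℂ) (hβμ : β μ ≠ 0)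
    (K₃ K₄ B : ℂ) (hK₃ : K₃ ≠ 0) (hK : K₃ ^ 2 + K₄ ^ 2 = 1)
    (hexp : Complex.exp ((1 / 2) * ∑ j, β j * c j)
      = (a₁ / (a₃ * K₃)) * ((K₄ * β μ) / 2 - (a₄ * K₃ / (4 * a₁)) * (β μ) ^ 2 - a₂ * K₃ / a₁))
    (f : (Fin n → ℂ) → ℂ)
    (hf : ∀ z, f z = (2 * K₃ / (a₁ * β μ)) * Complex.exp ((1 / 2) * ((∑ j, β j * z j) + B))) :
    ∀ z, (a₁ * pd μ f z) ^ 2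
        + (a₂ * f z + a₃ * f (z + c) + a₄ * pd μ (pd μ f) z) ^ 2
      = Complex.exp ((∑ j, β j * z j) + B) :=
  stmt15_general a₁ a₂ a₃ a₄ ha₁ ha₃ c μ β hβμ K₃ K₄ B hK₃ hK hexp f hf
end
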